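/- Let (W₁, W₂) be a pair of independent standard Brownian motions and fix α ∈ (1,2). For δ > 0 set v = 2δ^{−α}, and for a solution (Q₁,Q₂) of the two-armed Thompson sampling limit ODE with arm gap δ define g₁(t) = √(Q₂(t)/t) and g₂(t) = −√(Q₁(t)/t)·w₂(Q₂(t))/√(Q₂(t)), where (w₁,w₂) are the driving paths. Then: (1) deterministically, for every δ > 0 and every solution (Q₁,Q₂) satisfying Q₂(v) ≥ δ^{−α}, one has δ^{−α/2} ≤ g₁(t) ≤ 1 for all t ∈ [v, 1]; and (2) almost surely there exist a constant C > 0 and a threshold δ₀ such that for every δ ≥ δ₀ and every solution (Q₁,Q₂) driven by (W₁(ω), W₂(ω)) with arm gap δ satisfying Q₂(v) ≥ δ^{−α}, one has |g₂(t)| ≤ C·√(log log δ) for all t ∈ [v, 1]. -/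

import Mathlib

open MeasureTheory ProbabilityTheory Filter Set

/-- The standard normal distribution function `Φ`. -/
noncomputable def Phi (x : ℝ) : ℝ :=
  ∫ s in Set.Iic x, (Real.sqrt (2 * Real.pi))⁻¹ * Real.exp (-s ^ 2 / 2)

/-- `W` is a standard Brownian motion under `P`: continuous sample paths, `W₀ = 0`,
Gaussian increments `W_t - W_s ~ N(0, t - s)`, and independent increments. -/
def IsStdBM {Ω : Type*} [MeasurableSpace Ω] (P : Measure Ω) (W : ℝ → Ω → ℝ) : Prop :=
  (∀ ω, Continuous fun t => W t ω) ∧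
  (∀ ω, W 0 ω = 0) ∧
  (∀ s t : ℝ, 0 ≤ s → s < t →
    Measure.map (fun ω => W t ω - W s ω) P = gaussianReal 0 (Real.toNNReal (t - s))) ∧
  (∀ (n : ℕ) (t : Fin (n + 1) → ℝ), (∀ i, 0 ≤ t i) → StrictMono t →
    iIndepFun
      (fun i : Fin n => fun ω => W (t i.succ) ω - W (t i.castSucc) ω) P)

/-- `W₁, W₂` are independent standard Brownian motions under `P`. -/
def IndepBMs {Ω : Type*} [MeasurableSpace Ω] (P : Measure Ω) (W₁ W₂ : ℝ → Ω → ℝ) : Prop :=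
  IsStdBM P W₁ ∧ IsStdBM P W₂ ∧
  IndepFun (fun ω => fun t => W₁ t ω) (fun ω => fun t => W₂ t ω) P

/-- A solution of the two-armed Thompson sampling limit ODE driven by `(w₁, w₂)`
with arm gap `δ`, unit variance and no smoothing. -/
def IsTwoArmSol (w₁ w₂ : ℝ → ℝ) (δ : ℝ) (Q₁ Q₂ : ℝ → ℝ) : Prop :=
  ContinuousOn Q₁ (Set.Icc 0 1) ∧ ContinuousOn Q₂ (Set.Icc 0 1) ∧
  MonotoneOn Q₁ (Set.Icc 0 1) ∧ MonotoneOn Q₂ (Set.Icc 0 1) ∧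
  Q₁ 0 = 0 ∧ Q₂ 0 = 0 ∧ (∀ t ∈ Set.Icc (0:ℝ) 1, Q₁ t + Q₂ t = t) ∧
  (∀ t ∈ Set.Ioc (0:ℝ) 1, 0 < Q₁ t) ∧ (∀ t ∈ Set.Ioc (0:ℝ) 1, 0 < Q₂ t) ∧
  (∀ t ∈ Set.Ioc (0:ℝ) 1,
    HasDerivWithinAt Q₁
      (Phi ((δ * Q₁ t * Q₂ t + Q₂ t * w₁ (Q₁ t) - Q₁ t * w₂ (Q₂ t)) /
        Real.sqrt (t * Q₁ t * Q₂ t))) (Set.Icc 0 1) t)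


/-!
Part (1) follows from the monotonicity of `Q₂` and `Q₁ + Q₂ = t`. For part (2), since
`Q₁ / t ≤ 1` it suffices to bound `|W₂ s| / √s` for `s = Q₂ t ∈ [δ^{-α}, 1]`. Dyadic chaining
with Gaussian tail bounds on the increments gives `P (sup_{[0,u]} |W| > 6 B √u) ≤ 4 e^{-B²/2}`;
at the scales `u = 2⁻ᵏ` with `B ≍ √(log k)` these probabilities are summable, so by
Borel–Cantelli almost surely `|W s| ≤ C √s √(log (log₂ (1/s) + 3))` on `(0, 1]`. Finally
`log₂ (1/s) ≤ α log δ / log 2 ≤ 3 log δ`, which turns this into `C' √(log log δ)`.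
-/

open Real Topology

namespace ProbabilityTheory.HasLaw

variable {Ω : Type*} [MeasurableSpace Ω] {P : Measure Ω} {X : Ω → ℝ} {v : NNReal}

lemma hasSubgaussianMGF_of_gaussianReal (hX : HasLaw X (gaussianReal 0 v) P) :
    HasSubgaussianMGF X v P where
  integrable_exp_mul t := by
    have : IsProbabilityMeasure P := hX.isProbabilityMeasure
    rw [← mgf_pos_iff, mgf_gaussianReal hX.map_eq]
    exact exp_pos _
  mgf_le t := by simp [mgf_gaussianReal hX.map_eq]

lemma measure_lt_abs_le_of_gaussianReal (hX : HasLaw X (gaussianReal 0 v) P) {r : ℝ} (hr : 0 ≤ r) :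
    P {ω | r < |X ω|} ≤ ENNReal.ofReal (2 * exp (-r ^ 2 / (2 * v))) := by
  have : IsProbabilityMeasure P := hX.isProbabilityMeasure
  have hsub := hX.hasSubgaussianMGF_of_gaussianReal
  have hsplit : {ω | r < |X ω|} ⊆ {ω | r ≤ X ω} ∪ {ω | r ≤ (-X) ω} := fun ω hω =>
    (lt_abs.mp hω).imp le_of_lt fun h => show r ≤ -X ω from h.le
  calc P {ω | r < |X ω|} ≤ P {ω | r ≤ X ω} + P {ω | r ≤ (-X) ω} :=
        (measure_mono hsplit).trans (measure_union_le _ _)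
    _ = ENNReal.ofReal (P.real {ω | r ≤ X ω}) + ENNReal.ofReal (P.real {ω | r ≤ (-X) ω}) := by
        rw [ofReal_measureReal, ofReal_measureReal]
    _ ≤ ENNReal.ofReal (exp (-r ^ 2 / (2 * v))) + ENNReal.ofReal (exp (-r ^ 2 / (2 * v))) := by
        gcongr
        exacts [hsub.measure_ge_le hr, hsub.neg.measure_ge_le hr]
    _ = ENNReal.ofReal (2 * exp (-r ^ 2 / (2 * v))) := by
        rw [← ENNReal.ofReal_add (by positivity) (by positivity)]
        ring_nf

end ProbabilityTheory.HasLaw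

lemma Nat.floor_two_mul_eq_or {x : ℝ} (hx : 0 ≤ x) :
    ⌊2 * x⌋₊ = 2 * ⌊x⌋₊ ∨ ⌊2 * x⌋₊ = 2 * ⌊x⌋₊ + 1 := by
  have hlow : 2 * ⌊x⌋₊ ≤ ⌊2 * x⌋₊ :=
    Nat.le_floor (by push_cast; linarith [Nat.floor_le hx])
  have hhigh : ⌊2 * x⌋₊ < 2 * ⌊x⌋₊ + 2 :=
    (Nat.floor_lt (by positivity)).mpr (by push_cast; linarith [Nat.lt_floor_add_one x])
  omega

theorem abs_le_of_abs_dyadic_increment_le {f : ℝ → ℝ} (hf : Continuous f) (hf0 : f 0 = 0)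
    {ε : ℕ → ℝ} {S : ℝ} (hS : ∀ n, ∑ j ∈ Finset.range n, ε j ≤ S)
    (hε : ∀ j m : ℕ, m < 2 ^ j → |f ((m + 1) / 2 ^ j) - f (m / 2 ^ j)| ≤ ε j)
    {s : ℝ} (hs : s ∈ Icc 0 1) : |f s| ≤ S := by
  set a : ℕ → ℕ := fun j => ⌊s * 2 ^ j⌋₊ with ha
  -- `p j ↑ s`, and `p (j + 1)` is `p j` or its right neighbour on the grid `ℕ / 2 ^ (j + 1)`
  set p : ℕ → ℝ := fun j => a j / 2 ^ j with hp
  have ha_le : ∀ j, a j ≤ 2 ^ j := fun j =>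
    Nat.floor_le_of_le (by push_cast; nlinarith [hs.2, pow_pos (two_pos : (0:ℝ) < 2) j])
  have hpair : ∀ (j b c : ℕ), c = 2 * b ∨ c = 2 * b + 1 → c ≤ 2 ^ j →
      |f (c / 2 ^ j) - f ((2 * b : ℕ) / 2 ^ j)| ≤ ε j := by
    rintro j b c (rfl | rfl) hc
    · simpa using (abs_nonneg _).trans (hε j 0 (by positivity))
    · simpa using hε j (2 * b) (by omega)
  have hbase : |f (p 0)| ≤ ε 0 := by
    have := hpair 0 0 (a 0) (by have := ha_le 0; omega) (ha_le 0)
    simpa [hp, hf0] using this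
  have hstep : ∀ j, |f (p (j + 1)) - f (p j)| ≤ ε (j + 1) := by
    intro j
    have h2 : a (j + 1) = ⌊2 * (s * 2 ^ j)⌋₊ := by simp only [ha, pow_succ]; ring_nf
    have hpj : p j = ((2 * a j : ℕ) : ℝ) / 2 ^ (j + 1) := by
      simp only [hp]; push_cast; field_simp; ring
    rw [hpj]
    exact hpair (j + 1) (a j) (a (j + 1)) (h2 ▸ Nat.floor_two_mul_eq_or (by positivity [hs.1]))
      (ha_le _)
  have hpartial : ∀ n, |f (p n)| ≤ ∑ j ∈ Finset.range (n + 1), ε j := by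
    intro n
    induction n with
    | zero => simpa using hbase
    | succ n ih =>
      rw [Finset.sum_range_succ]
      calc |f (p (n + 1))| ≤ |f (p n)| + |f (p (n + 1)) - f (p n)| := by
            simpa using abs_add_le (f (p n)) (f (p (n + 1)) - f (p n))
        _ ≤ _ := add_le_add ih (hstep n)
  have hp_lim : Tendsto p atTop (𝓝 s) :=
    (tendsto_nat_floor_mul_div_atTop hs.1).comp
      (tendsto_pow_atTop_atTop_of_one_lt one_lt_two)
  exact le_of_tendsto' ((hf.tendsto s).comp hp_lim).abs
    fun n => (hpartial n).trans (hS _)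

lemma two_pow_mul_exp_le {B : ℝ} (hB : 4 ≤ B) (j : ℕ) :
    (2 : ℝ) ^ j * (2 * exp (-B ^ 2 * (25 / 18) ^ j / 2)) ≤ 2 * exp (-B ^ 2 / 2) * (1 / 2) ^ j := by
  have hbernoulli : 1 + j * (7 / 18 : ℝ) ≤ (25 / 18) ^ j := by
    have h := one_add_mul_le_pow (by norm_num : (-2 : ℝ) ≤ 7 / 18) j
    norm_num at h
    linarith
  have hexponent : -B ^ 2 * (25 / 18) ^ j / 2 ≤ -B ^ 2 / 2 + j * (-3) := by
    have hB2 : 16 ≤ B ^ 2 := by nlinarith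
    nlinarith [mul_nonneg (sub_nonneg.2 hB2) (sub_nonneg.2 ((le_add_of_nonneg_right
      (by positivity : (0 : ℝ) ≤ j * (7 / 18))).trans hbernoulli))]
  have hexp3 : exp (-3) ≤ 1 / 4 := by
    rw [exp_neg, one_div]
    exact inv_anti₀ (by norm_num) (by linarith [add_one_le_exp (3 : ℝ)])
  calc (2 : ℝ) ^ j * (2 * exp (-B ^ 2 * (25 / 18) ^ j / 2))
      ≤ 2 ^ j * (2 * (exp (-B ^ 2 / 2) * exp (-3) ^ j)) := by
        rw [← exp_nat_mul, ← exp_add]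
        gcongr
    _ ≤ 2 ^ j * (2 * (exp (-B ^ 2 / 2) * (1 / 4) ^ j)) := by gcongr
    _ = 2 * exp (-B ^ 2 / 2) * (1 / 2) ^ j := by
        rw [show (1 / 4 : ℝ) = 2⁻¹ * (1 / 2) by norm_num, mul_pow, inv_pow]
        field_simp

lemma one_le_log_nat_add_three (k : ℕ) : 1 ≤ log (k + 3) := by
  rw [le_log_iff_exp_le (by positivity)]
  linarith [exp_one_lt_d9, (Nat.cast_nonneg k : (0 : ℝ) ≤ k)]

theorem exists_abs_le_sqrt_mul_sqrt_log_logb {f : ℝ → ℝ} (hf : ContinuousOn f (Icc 0 1))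
    {A : ℝ} {K : ℕ} (hA : 0 ≤ A)
    (hK : ∀ k ≥ K, ∀ s ∈ Icc 0 ((2 : ℝ) ^ k)⁻¹, |f s| ≤ A * √((2 : ℝ) ^ k)⁻¹ * √(log (k + 3))) :
    ∃ C > 0, ∀ s ∈ Ioc 0 1, |f s| ≤ C * √s * √(log (logb 2 s⁻¹ + 3)) := by
  obtain ⟨M, hM⟩ := isCompact_Icc.exists_bound_of_continuousOn hf
  have hM0 : 0 ≤ M := (norm_nonneg _).trans (hM 0 ⟨le_rfl, zero_le_one⟩)
  have h2K : (0 : ℝ) ≤ M * 2 ^ K := by positivity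
  refine ⟨2 * A + M * 2 ^ K + 1, by linarith, fun s hs => ?_⟩
  set L := log (logb 2 s⁻¹ + 3)
  obtain ⟨k, hk, hk1⟩ := exists_nat_pow_near (one_le_inv₀ hs.1 |>.mpr hs.2) one_lt_two
  have hk_le : (k : ℝ) ≤ logb 2 s⁻¹ :=
    (le_logb_iff_rpow_le one_lt_two (inv_pos.2 hs.1)).2 (by rwa [rpow_natCast])
  have hkL : log (k + 3) ≤ L := log_le_log (by positivity) (by linarith)
  have hL : 1 ≤ √L := one_le_sqrt.2 ((one_le_log_nat_add_three k).trans hkL)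
  have hs_le : s ≤ ((2 : ℝ) ^ k)⁻¹ := (le_inv_comm₀ (by positivity) hs.1).mp hk
  rcases le_or_gt K k with hKk | hkK
  · have hscale : √((2 : ℝ) ^ k)⁻¹ ≤ 2 * √s := by
      have hlt : ((2 : ℝ) ^ k)⁻¹ < 2 * s := by
        rw [pow_succ, mul_comm] at hk1
        have := (inv_lt_comm₀ hs.1 (by positivity)).mp hk1
        rw [mul_inv] at this
        linarith
      calc √((2 : ℝ) ^ k)⁻¹ ≤ √(2 * s) := sqrt_le_sqrt hlt.le
        _ = √2 * √s := sqrt_mul zero_le_two s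
        _ ≤ 2 * √s := by gcongr; exact sqrt_le_iff.mpr ⟨by norm_num, by norm_num⟩
    calc |f s| ≤ A * √((2 : ℝ) ^ k)⁻¹ * √(log (k + 3)) := hK k hKk s ⟨hs.1.le, hs_le⟩
      _ ≤ A * (2 * √s) * √L := by gcongr
      _ = 2 * A * √s * √L := by ring
      _ ≤ (2 * A + M * 2 ^ K + 1) * √s * √L := by gcongr; linarith
  · have hs_ge : ((2 : ℝ) ^ K)⁻¹ ≤ s := by
      refine le_trans ?_ ((inv_le_comm₀ hs.1 (by positivity)).mp hk1.le)
      exact inv_anti₀ (by positivity) (pow_le_pow_right₀ one_le_two hkK)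
    have hs_sqrt : s ≤ √s := by
      nlinarith [mul_self_sqrt hs.1.le, sqrt_le_one.mpr hs.2, sqrt_nonneg s]
    calc |f s| ≤ M := by simpa using hM s ⟨hs.1.le, hs.2⟩
      _ = M * 2 ^ K * ((2 : ℝ) ^ K)⁻¹ := by field_simp
      _ ≤ M * 2 ^ K * s := by gcongr
      _ ≤ M * 2 ^ K * √s * √L := by
          rw [mul_assoc _ √s]
          gcongr
          nlinarith [sqrt_nonneg s]
      _ ≤ (2 * A + M * 2 ^ K + 1) * √s * √L := by gcongr; linarith

def HasGaussianIncrements {Ω : Type*} [MeasurableSpace Ω] (P : Measure Ω) (W : ℝ → Ω → ℝ) :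
    Prop :=
  ∀ s t : ℝ, 0 ≤ s → s < t →
    Measure.map (fun ω => W t ω - W s ω) P = gaussianReal 0 (Real.toNNReal (t - s))

namespace HasGaussianIncrements

variable {Ω : Type*} [MeasurableSpace Ω] {P : Measure Ω} {W : ℝ → Ω → ℝ}

lemma measure_lt_abs_sub_le (hW : HasGaussianIncrements P W) {s t r : ℝ} (hs : 0 ≤ s)
    (hst : s < t) (hr : 0 ≤ r) :
    P {ω | r < |W t ω - W s ω|} ≤ ENNReal.ofReal (2 * exp (-r ^ 2 / (2 * (t - s)))) := by
  have hlaw : HasLaw (fun ω => W t ω - W s ω) (gaussianReal 0 (t - s).toNNReal) P :=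
    ⟨aemeasurable_of_map_neZero (by rw [hW s t hs hst]; infer_instance), hW s t hs hst⟩
  simpa [Real.coe_toNNReal _ (sub_pos.mpr hst).le] using
    hlaw.measure_lt_abs_le_of_gaussianReal hr

lemma measure_dyadic_level_le (hW : HasGaussianIncrements P W) {u B : ℝ} (hu : 0 < u)
    (hB : 4 ≤ B) (j : ℕ) :
    P (⋃ m ∈ Finset.range (2 ^ j),
        {ω | B * √u * (5 / 6) ^ j < |W ((m + 1) / 2 ^ j * u) ω - W (m / 2 ^ j * u) ω|}) ≤
      ENNReal.ofReal (2 * exp (-B ^ 2 / 2) * (1 / 2) ^ j) := by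
  have hrate : -(B * √u * (5 / 6) ^ j) ^ 2 / (2 * (u / 2 ^ j)) = -B ^ 2 * (25 / 18) ^ j / 2 := by
    rw [mul_pow, mul_pow, sq_sqrt hu.le, show (25 / 18 : ℝ) = (5 / 6) ^ 2 * 2 by norm_num,
      mul_pow, ← pow_mul, ← pow_mul]
    field_simp
    ring
  have hincrement : ∀ m : ℕ,
      P {ω | B * √u * (5 / 6) ^ j < |W ((m + 1) / 2 ^ j * u) ω - W (m / 2 ^ j * u) ω|} ≤
        ENNReal.ofReal (2 * exp (-B ^ 2 * (25 / 18) ^ j / 2)) := by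
    intro m
    have hlen : (m + 1 : ℝ) / 2 ^ j * u - m / 2 ^ j * u = u / 2 ^ j := by ring
    have hB0 : 0 ≤ B := by linarith
    have := hW.measure_lt_abs_sub_le (s := m / 2 ^ j * u) (t := (m + 1) / 2 ^ j * u)
      (r := B * √u * (5 / 6) ^ j) (by positivity) (by gcongr; linarith) (by positivity)
    rwa [hlen, hrate] at this
  calc _ ≤ ∑ m ∈ Finset.range (2 ^ j), ENNReal.ofReal (2 * exp (-B ^ 2 * (25 / 18) ^ j / 2)) :=
        (measure_biUnion_finset_le _ _).trans (Finset.sum_le_sum fun m _ => hincrement m)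
    _ = ENNReal.ofReal ((2 : ℝ) ^ j * (2 * exp (-B ^ 2 * (25 / 18) ^ j / 2))) := by
        simp [ENNReal.ofReal_mul, ENNReal.ofReal_pow]
    _ ≤ _ := ENNReal.ofReal_le_ofReal (two_pow_mul_exp_le hB j)

/-- Dyadic chaining with the thresholds `B √u (5/6) ^ j` at level `j`, which sum to `6 B √u`. -/
theorem measure_exists_abs_gt_le (hW : HasGaussianIncrements P W)
    (hcont : ∀ ω, Continuous fun t => W t ω) (h0 : ∀ ω, W 0 ω = 0)
    {u B : ℝ} (hu : 0 < u) (hB : 4 ≤ B) :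
    P {ω | ∃ s ∈ Icc 0 u, 6 * B * √u < |W s ω|} ≤ ENNReal.ofReal (4 * exp (-B ^ 2 / 2)) := by
  set bad : ℕ → Set Ω := fun j => ⋃ m ∈ Finset.range (2 ^ j),
    {ω | B * √u * (5 / 6) ^ j < |W ((m + 1) / 2 ^ j * u) ω - W (m / 2 ^ j * u) ω|} with hbad
  have hsum : ∀ n, ∑ j ∈ Finset.range n, B * √u * (5 / 6) ^ j ≤ 6 * B * √u := fun n => by
    have hgeom := geom_sum_Ico_le_of_lt_one (m := 0) (n := n) (by norm_num : (0 : ℝ) ≤ 5 / 6)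
      (by norm_num)
    rw [← Finset.range_eq_Ico] at hgeom
    norm_num at hgeom
    rw [← Finset.mul_sum, mul_comm 6 B, mul_right_comm]
    gcongr
  have hcover : {ω | ∃ s ∈ Icc 0 u, 6 * B * √u < |W s ω|} ⊆ ⋃ j, bad j := by
    rintro ω ⟨s, hs, hgt⟩
    by_contra hgood
    simp only [hbad, mem_iUnion, mem_ofPred_eq, Finset.mem_range, not_exists, not_lt] at hgood
    refine hgt.not_ge ?_
    have hsu : s / u ∈ Icc (0 : ℝ) 1 := ⟨div_nonneg hs.1 hu.le, (div_le_one hu).mpr hs.2⟩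
    simpa [div_mul_cancel₀ s hu.ne'] using
      abs_le_of_abs_dyadic_increment_le (f := fun x => W (x * u) ω) (by fun_prop)
        (by simpa using h0 ω) hsum hgood hsu
  calc P {ω | ∃ s ∈ Icc 0 u, 6 * B * √u < |W s ω|} ≤ ∑' j, P (bad j) :=
        (measure_mono hcover).trans (measure_iUnion_le _)
    _ ≤ ∑' j : ℕ, ENNReal.ofReal (2 * exp (-B ^ 2 / 2) * (1 / 2) ^ j) :=
        ENNReal.tsum_le_tsum (hW.measure_dyadic_level_le hu hB)
    _ = ENNReal.ofReal (4 * exp (-B ^ 2 / 2)) := by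
        rw [← ENNReal.ofReal_tsum_of_nonneg (fun j => by positivity)
          (summable_geometric_two.mul_left _), tsum_mul_left, tsum_geometric_two]
        ring_nf

/-- Borel–Cantelli applied to the maximal inequality at the scales `u = 2⁻ᵏ` with
`B = 4 √(log (k + 3))`. -/
theorem ae_eventually_abs_le (hW : HasGaussianIncrements P W)
    (hcont : ∀ ω, Continuous fun t => W t ω) (h0 : ∀ ω, W 0 ω = 0) :
    ∀ᵐ ω ∂P, ∀ᶠ k : ℕ in atTop, ∀ s ∈ Icc 0 ((2 : ℝ) ^ k)⁻¹,
      |W s ω| ≤ 24 * √((2 : ℝ) ^ k)⁻¹ * √(log (k + 3)) := by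
  set B : ℕ → ℝ := fun k => 4 * √(log (k + 3)) with hB
  set F : ℕ → Set Ω := fun k =>
    {ω | ∃ s ∈ Icc 0 ((2 : ℝ) ^ k)⁻¹, 6 * B k * √((2 : ℝ) ^ k)⁻¹ < |W s ω|} with hF
  have hF_le : ∀ k : ℕ, P (F k) ≤ ENNReal.ofReal (4 * ((k + 3 : ℝ) ^ 8)⁻¹) := by
    intro k
    have hB4 : 4 ≤ B k := by
      have := one_le_sqrt.mpr (one_le_log_nat_add_three k)
      simp only [hB]
      linarith
    have hexp : exp (-B k ^ 2 / 2) = ((k + 3 : ℝ) ^ 8)⁻¹ := by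
      rw [hB, mul_pow, sq_sqrt (zero_le_one.trans (one_le_log_nat_add_three k)),
        show -(4 ^ 2 * log (k + 3)) / 2 = -((8 : ℕ) * log (k + 3 : ℝ)) by norm_num; ring,
        exp_neg, exp_nat_mul, exp_log (by positivity)]
    rw [← hexp]
    exact hW.measure_exists_abs_gt_le hcont h0 (by positivity) hB4
  have hsummable : Summable fun k : ℕ => 4 * ((k + 3 : ℝ) ^ 8)⁻¹ := by
    have h : Summable fun k : ℕ => (((k + 3 : ℕ) : ℝ) ^ 8)⁻¹ :=
      (summable_nat_add_iff 3).mpr (Real.summable_nat_pow_inv.mpr (by norm_num))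
    exact (h.mul_left 4).congr fun k => by push_cast; ring
  have hF_sum : ∑' k, P (F k) ≠ ⊤ :=
    ne_top_of_le_ne_top ENNReal.ofReal_ne_top <|
      (ENNReal.tsum_le_tsum hF_le).trans_eq
        (ENNReal.ofReal_tsum_of_nonneg (fun k => by positivity) hsummable).symm
  filter_upwards [ae_eventually_notMem hF_sum] with ω hω
  refine hω.mono fun k hk s hs => ?_
  simp only [hF, mem_ofPred_eq, not_exists, not_and, not_lt] at hk
  calc |W s ω| ≤ 6 * B k * √((2 : ℝ) ^ k)⁻¹ := hk s hs
    _ = 24 * √((2 : ℝ) ^ k)⁻¹ * √(log (k + 3)) := by rw [hB]; ring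

theorem ae_exists_abs_le_sqrt_mul_sqrt_log_logb (hW : HasGaussianIncrements P W)
    (hcont : ∀ ω, Continuous fun t => W t ω) (h0 : ∀ ω, W 0 ω = 0) :
    ∀ᵐ ω ∂P, ∃ C > 0, ∀ s ∈ Ioc 0 1, |W s ω| ≤ C * √s * √(log (logb 2 s⁻¹ + 3)) := by
  filter_upwards [hW.ae_eventually_abs_le hcont h0] with ω hω
  obtain ⟨K, hK⟩ := eventually_atTop.mp hω
  exact exists_abs_le_sqrt_mul_sqrt_log_logb (hcont ω).continuousOn (by norm_num) hK

end HasGaussianIncrements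

lemma log_logb_inv_add_three_le {α δ s : ℝ} (hα : α ≤ 2) (hδ : exp 3 ≤ δ) (hs : δ ^ (-α) ≤ s)
    (hs1 : s ≤ 1) : log (logb 2 s⁻¹ + 3) ≤ 3 * log (log δ) := by
  have hδ0 : 0 < δ := (exp_pos 3).trans_le hδ
  have hlogδ : 3 ≤ log δ := (le_log_iff_exp_le hδ0).mpr hδ
  have hs0 : 0 < s := (rpow_pos_of_pos hδ0 _).trans_le hs
  have hlogb : logb 2 s⁻¹ ≤ 3 * log δ := by
    have hinv : s⁻¹ ≤ δ ^ α := by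
      simpa [rpow_neg hδ0.le] using inv_anti₀ (rpow_pos_of_pos hδ0 _) hs
    calc logb 2 s⁻¹ ≤ logb 2 (δ ^ α) := logb_le_logb_of_le one_lt_two (inv_pos.2 hs0) hinv
      _ = α * log δ / log 2 := by rw [logb, log_rpow hδ0]
      _ ≤ 3 * log δ := by
          rw [div_le_iff₀ (log_pos one_lt_two)]
          nlinarith [log_two_gt_d9]
  calc log (logb 2 s⁻¹ + 3) ≤ log (log δ ^ 3) := by
        refine log_le_log (by linarith [logb_nonneg one_lt_two ((one_le_inv₀ hs0).mpr hs1)]) ?_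
        have hsq : 9 ≤ log δ ^ 2 := by nlinarith
        nlinarith [mul_le_mul_of_nonneg_right hsq (by linarith : 0 ≤ log δ)]
    _ = 3 * log (log δ) := by rw [log_pow]; norm_num

namespace IsTwoArmSol

variable {w₁ w₂ Q₁ Q₂ : ℝ → ℝ} {δ : ℝ}

lemma le_Q₂ (h : IsTwoArmSol w₁ w₂ δ Q₁ Q₂) {a v t : ℝ} (hv : 0 ≤ v)
    (hav : a ≤ Q₂ v) (ht : t ∈ Icc v 1) : a ≤ Q₂ t :=
  hav.trans (h.2.2.2.1 ⟨hv, ht.1.trans ht.2⟩ ⟨hv.trans ht.1, ht.2⟩ ht.1)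

lemma Q₁_le (h : IsTwoArmSol w₁ w₂ δ Q₁ Q₂) {t : ℝ} (ht : t ∈ Ioc 0 1) :
    Q₁ t ≤ t := by
  linarith [h.2.2.2.2.2.2.1 t ⟨ht.1.le, ht.2⟩, h.2.2.2.2.2.2.2.2.1 t ht]

lemma Q₂_le (h : IsTwoArmSol w₁ w₂ δ Q₁ Q₂) {t : ℝ} (ht : t ∈ Ioc 0 1) :
    Q₂ t ≤ t := by
  linarith [h.2.2.2.2.2.2.1 t ⟨ht.1.le, ht.2⟩, h.2.2.2.2.2.2.2.1 t ht]

lemma sqrt_Q₂_div_mem_Icc (h : IsTwoArmSol w₁ w₂ δ Q₁ Q₂) {α t : ℝ} (hδ : 0 < δ)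
    (hQv : δ ^ (-α) ≤ Q₂ (2 * δ ^ (-α))) (ht : t ∈ Icc (2 * δ ^ (-α)) 1) :
    √(Q₂ t / t) ∈ Icc (δ ^ (-α / 2)) 1 := by
  have hv : 0 < δ ^ (-α) := rpow_pos_of_pos hδ _
  have ht0 : 0 < t := by linarith [ht.1]
  have hQ₂ : δ ^ (-α) ≤ Q₂ t := h.le_Q₂ (by positivity) hQv ht
  refine ⟨?_, sqrt_le_one.mpr ((div_le_one ht0).mpr (h.Q₂_le ⟨ht0, ht.2⟩))⟩
  calc δ ^ (-α / 2) = √(δ ^ (-α)) := by rw [sqrt_eq_rpow, ← rpow_mul hδ.le]; ring_nf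
    _ ≤ √(Q₂ t / t) := sqrt_le_sqrt (hQ₂.trans (le_div_self (by linarith) ht0 ht.2))

lemma abs_neg_sqrt_mul_div_sqrt_le (h : IsTwoArmSol w₁ w₂ δ Q₁ Q₂) {α C t : ℝ}
    (hα : α ≤ 2) (hC : 0 ≤ C) (hδ : exp 3 ≤ δ)
    (hw₂ : ∀ s ∈ Ioc 0 1, |w₂ s| ≤ C * √s * √(log (logb 2 s⁻¹ + 3)))
    (hQv : δ ^ (-α) ≤ Q₂ (2 * δ ^ (-α))) (ht : t ∈ Icc (2 * δ ^ (-α)) 1) :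
    |(-√(Q₁ t / t)) * (w₂ (Q₂ t) / √(Q₂ t))| ≤ C * √3 * √(log (log δ)) := by
  have hδ0 : 0 < δ := (exp_pos 3).trans_le hδ
  have ht0 : 0 < t := by linarith [ht.1, rpow_pos_of_pos hδ0 (-α)]
  have hQ₂ : δ ^ (-α) ≤ Q₂ t := h.le_Q₂ (by positivity) hQv ht
  have hQ₂1 : Q₂ t ≤ 1 := (h.Q₂_le ⟨ht0, ht.2⟩).trans ht.2
  have hs : Q₂ t ∈ Ioc 0 1 := ⟨(rpow_pos_of_pos hδ0 _).trans_le hQ₂, hQ₂1⟩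
  have hw₂' : |w₂ (Q₂ t)| / √(Q₂ t) ≤ C * √(log (logb 2 (Q₂ t)⁻¹ + 3)) := by
    rw [div_le_iff₀ (sqrt_pos.mpr hs.1)]
    linarith [hw₂ _ hs]
  calc |(-√(Q₁ t / t)) * (w₂ (Q₂ t) / √(Q₂ t))| = √(Q₁ t / t) * (|w₂ (Q₂ t)| / √(Q₂ t)) := by
        rw [abs_mul, abs_neg, abs_div, abs_of_nonneg (sqrt_nonneg _),
          abs_of_nonneg (sqrt_nonneg _)]
    _ ≤ 1 * (C * √(log (logb 2 (Q₂ t)⁻¹ + 3))) := by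
        gcongr
        exact sqrt_le_one.mpr ((div_le_one ht0).mpr (h.Q₁_le ⟨ht0, ht.2⟩))
    _ ≤ C * √3 * √(log (log δ)) := by
        rw [one_mul, mul_assoc, ← sqrt_mul zero_le_three]
        gcongr
        exact log_logb_inv_add_three_le hα hδ hQ₂ hQ₂1

end IsTwoArmSol

/-- Bounds on `g₁(t) = √(Q₂(t)/t)` and `g₂(t) = -√(Q₁(t)/t) w₂(Q₂(t))/√(Q₂(t))` on
`[v, 1]` with `v = 2δ^{-α}`, on the event `Q₂(v) ≥ δ^{-α}`. -/
theorem g1_g2_bounds {Ω : Type*} [MeasurableSpace Ω] (P : Measure Ω)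
    (W₁ W₂ : ℝ → Ω → ℝ) (hW : IndepBMs P W₁ W₂) (α : ℝ) (hα : α ∈ Set.Ioo (1 : ℝ) 2) :
    (∀ δ : ℝ, 0 < δ → ∀ w₁ w₂ Q₁ Q₂ : ℝ → ℝ,
      IsTwoArmSol w₁ w₂ δ Q₁ Q₂ →
      δ ^ (-α) ≤ Q₂ (2 * δ ^ (-α)) →
      ∀ t ∈ Set.Icc (2 * δ ^ (-α)) 1,
        δ ^ (-α / 2) ≤ Real.sqrt (Q₂ t / t) ∧ Real.sqrt (Q₂ t / t) ≤ 1) ∧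
    (∀ᵐ ω ∂P, ∃ C > (0 : ℝ), ∃ δ₀ : ℝ, ∀ δ ≥ δ₀, ∀ Q₁ Q₂ : ℝ → ℝ,
      IsTwoArmSol (fun x => W₁ x ω) (fun x => W₂ x ω) δ Q₁ Q₂ →
      δ ^ (-α) ≤ Q₂ (2 * δ ^ (-α)) →
      ∀ t ∈ Set.Icc (2 * δ ^ (-α)) 1,
        |(-Real.sqrt (Q₁ t / t)) * (W₂ (Q₂ t) ω / Real.sqrt (Q₂ t))| ≤
          C * Real.sqrt (Real.log (Real.log δ))) := by
  refine ⟨fun δ hδ w₁ w₂ Q₁ Q₂ hsol hQv t ht => hsol.sqrt_Q₂_div_mem_Icc hδ hQv ht, ?_⟩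
  obtain ⟨-, ⟨hcont, h0, hinc, -⟩, -⟩ := hW
  filter_upwards [HasGaussianIncrements.ae_exists_abs_le_sqrt_mul_sqrt_log_logb hinc hcont h0]
    with ω ⟨C, hC, hbound⟩
  exact ⟨C * √3, by positivity, exp 3, fun δ hδ Q₁ Q₂ hsol hQv t ht =>
    hsol.abs_neg_sqrt_mul_div_sqrt_le hα.2.le hC.le hδ hbound hQv ht⟩
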